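/- Let N ≥ 2 and work in (ℂ²)^{⊗N}. For α ∈ ℂ define Ψ(α) = ψ_1^{(3)}(α) ⊗ ψ_2(α) ⊗ ⋯ ⊗ ψ_N(α), where ψ_1^{(3)}(α) = (1, ∑_{k=2}^N α^{2^{N−k}}) ∈ ℂ² and ψ_k(α) = (1, α^{2^{N−k}}) ∈ ℂ² for k = 2,…,N. For x ∈ {0,…,2^{N−1}−1} let e_{(x)} denote the basis vector of (ℂ²)^{⊗(N−1)} given by the (N−1)-digit binary expansion of x, and for j = 0,…,2^{N−2}−1 define w_j = e_0 ⊗ ( ∑_{k=2}^N e_{(2^{N−k}+j)} ) − e_1 ⊗ e_{(j)} ∈ (ℂ²)^{⊗N}. Then: (a) ⟨w_j, Ψ(α)⟩ = 0 for every j and every α ∈ ℂ; (b) the vectors w_0, …, w_{2^{N−2}−1} are linearly independent; (c) consequently, they span the orthogonal complement of span{Ψ(α) : α ∈ ℂ}, which has dimension 2^{N−2}. -/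

import Mathlib

open scoped InnerProductSpace

noncomputable section

/-- The `N`-qubit Hilbert space `(ℂ²)^{⊗N}` (here `N = n + 2 ≥ 2`), realized as the
Euclidean space whose coordinates are indexed by tuples of local indices. -/
abbrev QubitSpace (n : ℕ) := EuclideanSpace ℂ (Fin (n + 2) → Fin 2)

/-- The product vector `Ψ(α) = ψ₁⁽³⁾(α) ⊗ ψ₂(α) ⊗ ⋯ ⊗ ψ_N(α)` for `N = n + 2` qubits,
where `ψ₁⁽³⁾(α) = (1, ∑_{k=2}^N α^{2^{N-k}})` and `ψ_k(α) = (1, α^{2^{N-k}})` for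
`k = 2,…,N` (party `k` has index `i = k - 1`). -/
def Psi16 (n : ℕ) (α : ℂ) : QubitSpace n :=
  WithLp.toLp 2 (fun f => ∏ i : Fin (n + 2),
    if (i : ℕ) = 0 then
      (if f i = 0 then 1 else ∑ t ∈ Finset.range (n + 1), α ^ (2 ^ t))
    else α ^ ((f i : ℕ) * 2 ^ (n + 1 - (i : ℕ))))

/-- The number `x ∈ {0,…,2^{N-1}-1}` whose `(N-1)`-digit binary expansion is given by the
last `N - 1` local indices of `f` (party `k = 2,…,N` carries the binary digit of weight
`2^{N-k}`), so that the standard basis vector of `(ℂ²)^{⊗(N-1)}` with index tuple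
`(f 1, …, f (N-1))` is `e_{(x)}`. -/
def enc16 (n : ℕ) (f : Fin (n + 2) → Fin 2) : ℕ :=
  ∑ i : Fin (n + 2), if (i : ℕ) = 0 then 0 else (f i : ℕ) * 2 ^ (n + 1 - (i : ℕ))

/-- The vector `w_j = e₀ ⊗ (∑_{k=2}^N e_{(2^{N-k}+j)}) − e₁ ⊗ e_{(j)} ∈ (ℂ²)^{⊗N}`. -/
def w16 (n : ℕ) (j : ℕ) : QubitSpace n :=
  WithLp.toLp 2 (fun f =>
    (if f 0 = 0 then
        ∑ k ∈ Finset.Icc 2 (n + 2),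
          (if enc16 n f = 2 ^ (n + 2 - k) + j then (1 : ℂ) else 0)
      else 0)
    - (if f 0 = 1 ∧ enc16 n f = j then 1 else 0))

/-!
Split a basis index into its first qubit `b` and the number `x < 2^{N-1}` whose binary digits
are the other qubits. Then `⟪v, Ψ(α)⟫` is the value at `α` of `A + S * U`, where `A` and `U` have
the conjugated coordinates of `v` on `e₀ ⊗ e_{(x)}` and `e₁ ⊗ e_{(x)}` as coefficients and
`S = ∑_{t=0}^{N-2} X^{2^t}` has degree `2^{N-2}`. For `w_j` one gets `A = X^j S` and `U = -X^j`,
whence (a). If `v ⊥ Ψ(α)` for all `α`, then `A + S * U = 0`; if moreover the coefficients of `U`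
below `2^{N-2}` vanish, then `U ≠ 0` would force `deg (S * U) ≥ 2^{N-1} > deg A`, so `v = 0`.
Thus these `2^{N-2}` coordinates embed the orthogonal complement into `ℂ^{2^{N-2}}`, and the
`2^{N-2}` independent vectors `w_j`, which lie in it, span it.
-/

open Finset Polynomial

namespace Polynomial

variable {R : Type*}

theorem eq_zero_of_add_mul_eq_zero [CommRing R] [NoZeroDivisors R] {A S U : R[X]} (hS : S ≠ 0)
    (hA : A.natDegree < 2 * S.natDegree) (hU : ∀ k < S.natDegree, U.coeff k = 0)
    (h : A + S * U = 0) : U = 0 := by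
  by_contra hU0
  have hSU : S.natDegree ≤ U.natDegree := by
    by_contra! hlt
    exact hU0 (leadingCoeff_eq_zero.mp (hU _ hlt))
  rw [eq_neg_of_add_eq_zero_left h, natDegree_neg, natDegree_mul hS hU0] at hA
  omega

theorem eval_ofFn [CommSemiring R] [DecidableEq R] {N : ℕ} (v : Fin N → R) (a : R) :
    (ofFn N v).eval a = ∑ i, v i * a ^ (i : ℕ) := by
  simp [ofFn_eq_sum_monomial, eval_finsetSum]

theorem ofFn_eq_of_coeff [Semiring R] [DecidableEq R] {N : ℕ} {v : Fin N → R} {p : R[X]}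
    (hp : p.natDegree < N) (h : ∀ i : Fin N, v i = p.coeff i) : ofFn N v = p := by
  rw [← ofFn_comp_toFn_eq_id_of_natDegree_lt hp]
  congr 1
  ext i
  simp [toFn, h]

variable (R) in
/-- `ψ₁⁽³⁾(α) = (1, (dyadicSum ℂ n).eval α)`. -/
def dyadicSum [Semiring R] (n : ℕ) : R[X] := ∑ t ∈ range (n + 1), X ^ 2 ^ t

theorem natDegree_dyadicSum [Semiring R] [Nontrivial R] (n : ℕ) :
    (dyadicSum R n).natDegree = 2 ^ n := by
  have hlow : (∑ t ∈ range n, (X : R[X]) ^ 2 ^ t).natDegree < 2 ^ n := by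
    refine lt_of_le_of_lt (natDegree_sum_le_of_forall_le _ _ (n := 2 ^ n - 1) fun t ht => ?_)
      (Nat.sub_one_lt (by positivity))
    rw [natDegree_X_pow]
    have := Nat.pow_lt_pow_right (a := 2) one_lt_two (mem_range.mp ht)
    omega
  rw [dyadicSum, sum_range_succ, natDegree_add_eq_right_of_natDegree_lt, natDegree_X_pow]
  rwa [natDegree_X_pow]

theorem dyadicSum_ne_zero [Semiring R] [Nontrivial R] (n : ℕ) : dyadicSum R n ≠ 0 :=
  ne_zero_of_natDegree_gt (n := 0) (by rw [natDegree_dyadicSum]; positivity)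

end Polynomial

theorem Submodule.mem_orthogonal_span_range_iff {𝕜 E ι : Type*} [RCLike 𝕜] [NormedAddCommGroup E]
    [InnerProductSpace 𝕜 E] {f : ι → E} {v : E} :
    v ∈ (span 𝕜 (Set.range f))ᗮ ↔ ∀ i, ⟪v, f i⟫_𝕜 = 0 := by
  rw [← span_singleton_le_iff_mem, ← isOrtho_iff_le, isOrtho_span]
  simp

def qubitIndexEquiv (n : ℕ) : (Fin (n + 2) → Fin 2) ≃ Fin 2 × Fin (2 ^ (n + 1)) :=
  (Fin.consEquiv fun _ => Fin 2).symm.trans <| Equiv.prodCongr (Equiv.refl _) <|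
    (Fin.revPerm.arrowCongr (Equiv.refl _)).trans finFunctionFinEquiv

section

variable {n : ℕ}

theorem qubitIndexEquiv_apply_fst (f : Fin (n + 2) → Fin 2) : (qubitIndexEquiv n f).1 = f 0 :=
  rfl

theorem qubitIndexEquiv_apply_snd (f : Fin (n + 2) → Fin 2) :
    ((qubitIndexEquiv n f).2 : ℕ) = enc16 n f := by
  rw [enc16, Fin.sum_univ_succ]
  simp only [Fin.val_zero, Fin.val_succ, if_true, Nat.add_one_ne_zero, if_false, zero_add,
    Nat.add_sub_add_right]
  rw [← Equiv.sum_comp (Fin.revPerm (n := n + 1)) (fun i => (f i.succ : ℕ) * 2 ^ (n - i))]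
  refine (finFunctionFinEquiv_apply _).trans (sum_congr rfl fun i _ => ?_)
  simp [Fin.tail, Nat.sub_sub_self (Nat.le_of_lt_succ i.isLt)]

theorem qubitIndexEquiv_symm_apply_zero (p : Fin 2 × Fin (2 ^ (n + 1))) :
    (qubitIndexEquiv n).symm p 0 = p.1 := by
  rw [← qubitIndexEquiv_apply_fst ((qubitIndexEquiv n).symm p), Equiv.apply_symm_apply]

theorem enc16_qubitIndexEquiv_symm (p : Fin 2 × Fin (2 ^ (n + 1))) :
    enc16 n ((qubitIndexEquiv n).symm p) = p.2 := by
  rw [← qubitIndexEquiv_apply_snd ((qubitIndexEquiv n).symm p), Equiv.apply_symm_apply]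

theorem inner_eq_sum_qubitIndexEquiv (v w : QubitSpace n) :
    ⟪v, w⟫_ℂ = ∑ b : Fin 2, ∑ x : Fin (2 ^ (n + 1)),
      starRingEnd ℂ (v ((qubitIndexEquiv n).symm (b, x)))
        * w ((qubitIndexEquiv n).symm (b, x)) := by
  rw [PiLp.inner_apply, ← Fintype.sum_prod_type', ← (qubitIndexEquiv n).symm.sum_comp]
  simp only [RCLike.inner_apply, mul_comm]

theorem Psi16_apply (α : ℂ) (f : Fin (n + 2) → Fin 2) :
    Psi16 n α f = (if f 0 = 0 then 1 else (dyadicSum ℂ n).eval α) * α ^ enc16 n f := by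
  rw [Psi16, WithLp.ofLp_toLp, Fin.prod_univ_succ, enc16, Fin.sum_univ_succ]
  simp only [Fin.val_zero, Fin.val_succ, if_true, Nat.add_one_ne_zero, if_false, zero_add,
    ← prod_pow_eq_pow_sum]
  simp [dyadicSum, eval_finsetSum]

def branchPoly (v : QubitSpace n) (b : Fin 2) : ℂ[X] :=
  ofFn (2 ^ (n + 1)) fun x => starRingEnd ℂ (v ((qubitIndexEquiv n).symm (b, x)))

theorem inner_Psi16_eq_eval (v : QubitSpace n) (α : ℂ) :
    ⟪v, Psi16 n α⟫_ℂ = (branchPoly v 0 + dyadicSum ℂ n * branchPoly v 1).eval α := by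
  simp only [inner_eq_sum_qubitIndexEquiv, Fin.sum_univ_two, Psi16_apply,
    qubitIndexEquiv_symm_apply_zero, enc16_qubitIndexEquiv_symm, branchPoly, eval_add, eval_mul,
    eval_ofFn, mul_sum]
  simp [mul_left_comm]

theorem w16_symm_apply_zero (j : ℕ) (x : Fin (2 ^ (n + 1))) :
    w16 n j ((qubitIndexEquiv n).symm (0, x))
      = ∑ k ∈ Icc 2 (n + 2), if (x : ℕ) = 2 ^ (n + 2 - k) + j then 1 else 0 := by
  simp [w16, qubitIndexEquiv_symm_apply_zero, enc16_qubitIndexEquiv_symm]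

theorem w16_symm_apply_one (j : ℕ) (x : Fin (2 ^ (n + 1))) :
    w16 n j ((qubitIndexEquiv n).symm (1, x)) = -if (x : ℕ) = j then 1 else 0 := by
  simp [w16, qubitIndexEquiv_symm_apply_zero, enc16_qubitIndexEquiv_symm]

theorem branchPoly_w16_one {j : ℕ} (hj : j < 2 ^ (n + 1)) : branchPoly (w16 n j) 1 = -X ^ j := by
  refine ofFn_eq_of_coeff (by rwa [natDegree_neg, natDegree_X_pow]) fun x => ?_
  simp [w16_symm_apply_one, coeff_X_pow]

theorem branchPoly_w16_zero {j : ℕ} (hj : j < 2 ^ n) :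
    branchPoly (w16 n j) 0 = X ^ j * dyadicSum ℂ n := by
  have hdeg : (X ^ j * dyadicSum ℂ n).natDegree < 2 ^ (n + 1) := by
    rw [natDegree_mul (pow_ne_zero j X_ne_zero) (dyadicSum_ne_zero n), natDegree_X_pow,
      natDegree_dyadicSum]
    omega
  refine ofFn_eq_of_coeff hdeg fun x => ?_
  have hreflect : ∑ k ∈ Icc 2 (n + 2), (if (x : ℕ) = 2 ^ (n + 2 - k) + j then 1 else 0 : ℂ)
      = ∑ t ∈ range (n + 1), if (x : ℕ) = 2 ^ t + j then 1 else 0 := by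
    rw [← Ico_add_one_right_eq_Icc,
      sum_Ico_reflect (fun t => if (x : ℕ) = 2 ^ t + j then 1 else 0) 2 le_rfl, Nat.sub_self,
      range_eq_Ico]
    rfl
  simp [w16_symm_apply_zero, hreflect, dyadicSum, mul_sum, ← pow_add, coeff_X_pow, add_comm j]

theorem inner_w16_Psi16 {j : ℕ} (hj : j < 2 ^ n) (α : ℂ) : ⟪w16 n j, Psi16 n α⟫_ℂ = 0 := by
  rw [inner_Psi16_eq_eval, branchPoly_w16_zero hj,
    branchPoly_w16_one (hj.trans (Nat.pow_lt_pow_succ one_lt_two)), mul_neg, mul_comm,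
    add_neg_cancel, eval_zero]

theorem branchPoly_eq_zero_iff {v : QubitSpace n} {b : Fin 2} :
    branchPoly v b = 0 ↔ ∀ x, v ((qubitIndexEquiv n).symm (b, x)) = 0 := by
  rw [branchPoly, ← ofFn_zero, (injective_ofFn _).eq_iff, funext_iff]
  simp

variable (n) in
def lowCoords : QubitSpace n →ₗ[ℂ] Fin (2 ^ n) → ℂ :=
  LinearMap.pi fun i => (EuclideanSpace.proj ((qubitIndexEquiv n).symm
    (1, Fin.castLE (Nat.pow_le_pow_right two_pos n.le_succ) i))).toLinearMap

theorem lowCoords_w16 (j : Fin (2 ^ n)) : lowCoords n (w16 n j) = -Pi.single j 1 := by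
  ext i
  simp [lowCoords, w16_symm_apply_one, Pi.single_apply, Fin.ext_iff]

theorem eq_zero_of_inner_Psi16_eq_zero {v : QubitSpace n} (hv : ∀ α, ⟪v, Psi16 n α⟫_ℂ = 0)
    (hlow : lowCoords n v = 0) : v = 0 := by
  have hpoly : branchPoly v 0 + dyadicSum ℂ n * branchPoly v 1 = 0 :=
    Polynomial.funext fun α => by rw [← inner_Psi16_eq_eval, hv, eval_zero]
  have h1 : branchPoly v 1 = 0 := by
    refine eq_zero_of_add_mul_eq_zero (dyadicSum_ne_zero n) ?_ (fun k hk => ?_) hpoly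
    · rw [natDegree_dyadicSum, ← pow_succ']
      exact ofFn_natDegree_lt Nat.one_le_two_pow _
    · rw [natDegree_dyadicSum] at hk
      rw [branchPoly, ofFn_coeff_eq_val_of_lt _ (hk.trans (Nat.pow_lt_pow_succ one_lt_two))]
      simpa [lowCoords] using congr_fun hlow ⟨k, hk⟩
  have h0 : branchPoly v 0 = 0 := by simpa [h1] using hpoly
  ext f
  obtain ⟨⟨b, x⟩, rfl⟩ := (qubitIndexEquiv n).symm.surjective f
  fin_cases b
  · exact branchPoly_eq_zero_iff.1 h0 x
  · exact branchPoly_eq_zero_iff.1 h1 x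

end

theorem finrank_orthogonal_span_Psi16_le (n : ℕ) :
    Module.finrank ℂ (Submodule.span ℂ (Set.range (Psi16 n)))ᗮ ≤ 2 ^ n := by
  refine (LinearMap.finrank_le_finrank_of_injective (f := (lowCoords n).domRestrict _) ?_).trans
    (Module.finrank_fin_fun ℂ).le
  refine (injective_iff_map_eq_zero _).2 fun v hv => Subtype.ext ?_
  exact eq_zero_of_inner_Psi16_eq_zero (Submodule.mem_orthogonal_span_range_iff.1 v.2) hv

theorem linearIndependent_w16 (n : ℕ) :
    LinearIndependent ℂ (fun j : Fin (2 ^ n) => w16 n j) := by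
  refine LinearIndependent.of_comp (lowCoords n) ?_
  rw [show lowCoords n ∘ (fun j : Fin (2 ^ n) => w16 n j) = -fun j => Pi.single j 1 from
    funext lowCoords_w16]
  exact (Pi.linearIndependent_single_one _ ℂ).neg

/-- (a) Each `w_j` (`j = 0,…,2^{N-2}-1`) is orthogonal to every `Ψ(α)`;
(b) the `w_j` are linearly independent; (c) they span the orthogonal complement of
`span{Ψ(α) : α ∈ ℂ}`, which has dimension `2^{N-2}`. Here `N = n + 2`, so `2^{N-2} = 2^n`. -/
theorem stmt16 (n : ℕ) :
    (∀ j < 2 ^ n, ∀ α : ℂ, ⟪w16 n j, Psi16 n α⟫_ℂ = 0) ∧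
    LinearIndependent ℂ (fun j : Fin (2 ^ n) => w16 n (j : ℕ)) ∧
    Submodule.span ℂ (Set.range (fun j : Fin (2 ^ n) => w16 n (j : ℕ)))
      = (Submodule.span ℂ (Set.range (Psi16 n)))ᗮ ∧
    Module.finrank ℂ (Submodule.span ℂ (Set.range (Psi16 n)))ᗮ = 2 ^ n := by
  have hlin := linearIndependent_w16 n
  have hfinrank : Module.finrank ℂ (Submodule.span ℂ (Set.range fun j : Fin (2 ^ n) => w16 n j))
      = 2 ^ n := by
    rw [finrank_span_eq_card hlin, Fintype.card_fin]
  have hle : Submodule.span ℂ (Set.range fun j : Fin (2 ^ n) => w16 n j)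
      ≤ (Submodule.span ℂ (Set.range (Psi16 n)))ᗮ := by
    rw [Submodule.span_le]
    rintro _ ⟨j, rfl⟩
    exact Submodule.mem_orthogonal_span_range_iff.2 (inner_w16_Psi16 j.isLt)
  have hspan := Submodule.eq_of_le_of_finrank_le hle
    (hfinrank.symm ▸ finrank_orthogonal_span_Psi16_le n)
  exact ⟨fun j hj => inner_w16_Psi16 hj, hlin, hspan, hspan ▸ hfinrank⟩
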